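/- arXiv:2411.09923 — 3 statements merged into one kernel-verified Lean document; each statement's English description precedes it below -/
import Mathlib

section
/- Let p > q > 0 be coprime integers and let p/q = [a_1, …, a_n] be the continued fraction expansion p/q = a_1 - 1/(a_2 - 1/(⋯ - 1/a_n)) with all a_i ≥ 2. Then the symmetric tridiagonal n×n integer matrix M with diagonal entries a_1, …, a_n and off-diagonal entries 1 (i.e. M_{ii} = a_i, M_{i,i+1} = M_{i+1,i} = 1, and 0 elsewhere) is positive definite. -/
/-!
Write `M = Aᵀ A + diag (aᵢ - 2)`, where `A` is the `(n+1) × n` matrix whose `j`-th column is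
`e_j + e_{j+1}`. The first `n` rows of `A` form a lower unitriangular matrix, so `A` is injective
and `Aᵀ A` is positive definite; adding the positive semidefinite `diag (aᵢ - 2)` keeps it so.
-/

/-- The negative continued fraction `a₁ - 1/(a₂ - 1/(⋯ - 1/aₙ))` as a rational number. -/
def negCF : List ℤ → ℚ
  | [] => 0
  | a :: l => (a : ℚ) - (negCF l)⁻¹

namespace Matrix

variable {R : Type*} {n : ℕ}

variable (R) in
def pathIncidence [AddMonoidWithOne R] (n : ℕ) : Matrix (Fin (n + 1)) (Fin n) R :=
  (1 : Matrix _ _ R).submatrix id Fin.castSucc + (1 : Matrix _ _ R).submatrix id Fin.succ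

def pathTridiagonal [Zero R] [One R] (d : Fin n → R) : Matrix (Fin n) (Fin n) R :=
  of fun i j => if i = j then d i else if (i : ℕ) + 1 = j ∨ (j : ℕ) + 1 = i then 1 else 0

lemma one_submatrix_mul_one_submatrix [NonAssocSemiring R] {m l : Type*} [Fintype m]
    [DecidableEq m] (f g : l → m) :
    (1 : Matrix m m R).submatrix f id * (1 : Matrix m m R).submatrix id g =
      (1 : Matrix m m R).submatrix f g := by
  rw [← submatrix_mul _ _ _ _ _ Function.bijective_id, one_mul]

lemma pathTridiagonal_eq_transpose_mul_add [CommRing R] (d : Fin n → R) :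
    pathTridiagonal d = (pathIncidence R n)ᵀ * pathIncidence R n + diagonal (d - 2) := by
  ext i j
  simp only [pathIncidence, transpose_add, transpose_submatrix, transpose_one, Matrix.add_mul,
    Matrix.mul_add, one_submatrix_mul_one_submatrix]
  simp [pathTridiagonal, one_apply, diagonal_apply, Fin.ext_iff]
  split_ifs <;> first | omega | ring

lemma isLowerTriangular_pathIncidence_submatrix_castSucc [AddMonoidWithOne R] :
    ((pathIncidence R n).submatrix Fin.castSucc id).IsLowerTriangular := by
  intro i j hij
  simp [pathIncidence, one_apply, Fin.ext_iff] at hij ⊢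
  split_ifs <;> first | omega | simp

lemma det_pathIncidence_submatrix_castSucc [CommRing R] :
    ((pathIncidence R n).submatrix Fin.castSucc id).det = 1 := by
  rw [det_of_isLowerTriangular _ isLowerTriangular_pathIncidence_submatrix_castSucc]
  simp [pathIncidence, one_apply, Fin.ext_iff]

lemma mulVec_injective_of_submatrix [Semiring R] {m k l : Type*} [Fintype m] (A : Matrix k m R)
    (e : l → k) (hA : Function.Injective (A.submatrix e id).mulVec) :
    Function.Injective A.mulVec :=
  fun _ _ hxy => hA (funext fun i => congrFun hxy (e i))

lemma mulVec_injective_pathIncidence [CommRing R] :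
    Function.Injective (pathIncidence R n).mulVec := by
  refine mulVec_injective_of_submatrix _ Fin.castSucc (mulVec_injective_of_isUnit ?_)
  simp [isUnit_iff_isUnit_det, det_pathIncidence_submatrix_castSucc]

theorem posDef_pathTridiagonal [CommRing R] [PartialOrder R] [StarRing R] [TrivialStar R]
    [StarOrderedRing R] [NoZeroDivisors R] {d : Fin n → R} (hd : ∀ i, 2 ≤ d i) :
    (pathTridiagonal d).PosDef := by
  rw [pathTridiagonal_eq_transpose_mul_add, ← conjTranspose_eq_transpose_of_trivial]
  exact (PosDef.conjTranspose_mul_self _ mulVec_injective_pathIncidence).add_posSemidef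
    (posSemidef_diagonal_iff.mpr fun i => sub_nonneg.mpr (hd i))

end Matrix

theorem tridiagonal_posDef_general
    (n : ℕ) (a : Fin n → ℤ) (ha : ∀ i, 2 ≤ a i)
    (M : Matrix (Fin n) (Fin n) ℝ)
    (hM : ∀ i j, M i j =
      if (i : ℕ) = (j : ℕ) then (a i : ℝ)
      else if (i : ℕ) + 1 = (j : ℕ) ∨ (j : ℕ) + 1 = (i : ℕ) then 1 else 0) :
    M.PosDef := by
  have hM' : M = Matrix.pathTridiagonal fun i => (a i : ℝ) := by
    ext i j
    simp [hM, Matrix.pathTridiagonal, Fin.ext_iff]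
  rw [hM']
  exact Matrix.posDef_pathTridiagonal fun i => by exact_mod_cast ha i

theorem tridiagonal_posDef (p q : ℤ) (hq : 0 < q) (hpq : q < p) (hcop : IsCoprime p q)
    (n : ℕ) (a : Fin n → ℤ) (ha : ∀ i, 2 ≤ a i)
    (hcf : negCF (List.ofFn a) = (p : ℚ) / (q : ℚ))
    (M : Matrix (Fin n) (Fin n) ℝ)
    (hM : ∀ i j, M i j =
      if (i : ℕ) = (j : ℕ) then (a i : ℝ)
      else if (i : ℕ) + 1 = (j : ℕ) ∨ (j : ℕ) + 1 = (i : ℕ) then 1 else 0) :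
    M.PosDef :=
  tridiagonal_posDef_general n a ha M hM
end

section
/- Let a_1, …, a_n ≥ 2 be integers and let t be an element of an abelian group G. Define c_{n+1} = 0, c_n = 1, and recursively c_i = -a_{i+1} c_{i+1} - c_{i+2} for 0 ≤ i ≤ n-1. If t_i := t^{c_i} for 1 ≤ i ≤ n and t_0 = t_{n+1} = 1, then t_{i-1} · t_i^{a_i} · t_{i+1} = 1 holds for all 1 ≤ i ≤ n if and only if t^{c_0} = 1. -/
theorem chain_relations_iff {G : Type*} [CommGroup G] (t : G) (n : ℕ) (hn : 1 ≤ n)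
    (a : ℕ → ℤ) (ha : ∀ i, 1 ≤ i → i ≤ n → 2 ≤ a i)
    (c : ℕ → ℤ) (hc1 : c (n + 1) = 0) (hc2 : c n = 1)
    (hrec : ∀ i, i ≤ n - 1 → c i = -a (i + 1) * c (i + 1) - c (i + 2))
    (T : ℕ → G) (hT0 : T 0 = 1) (hTn : T (n + 1) = 1)
    (hT : ∀ i, 1 ≤ i → i ≤ n → T i = t ^ c i) :
    (∀ i, 1 ≤ i → i ≤ n → T (i - 1) * T i ^ a i * T (i + 1) = 1) ↔ t ^ c 0 = 1 := by
  have hT' : ∀ i, 1 ≤ i → i ≤ n → T (i + 1) = t ^ c (i + 1) := by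
    intro i h1 h2
    rcases eq_or_lt_of_le h2 with rfl | h
    · rw [hTn, hc1]; simp
    · exact hT (i + 1) (by omega) (by omega)
  have key : c 1 * a 1 + c 2 = -c 0 := by
    rw [hrec 0 (by omega)]; ring
  constructor
  · intro h
    have h1 := h 1 le_rfl hn
    rw [hT0, hT 1 le_rfl hn, hT' 1 le_rfl hn, one_mul, ← zpow_mul, ← zpow_add,
      key, zpow_neg, inv_eq_one] at h1
    exact h1
  · intro h i h1 h2
    rcases eq_or_lt_of_le h1 with rfl | hi
    · rw [hT0, hT 1 le_rfl hn, hT' 1 le_rfl hn, one_mul, ← zpow_mul, ← zpow_add,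
        key, zpow_neg, h, inv_one]
    · rw [hT (i - 1) (by omega) (by omega), hT i h1 h2, hT' i h1 h2,
        ← zpow_mul, ← zpow_add, ← zpow_add]
      have hrec' := hrec (i - 1) (by omega)
      have e1 : i - 1 + 1 = i := by omega
      have e2 : i - 1 + 2 = i + 1 := by omega
      rw [e1, e2] at hrec'
      have hz : c (i - 1) + c i * a i + c (i + 1) = 0 := by rw [hrec']; ring
      rw [hz, zpow_zero]
end

section
/- Let p ≥ 3 be odd, η = exp(2πi/p), and let q, q', c be integers coprime to p with 0 < q, q' < p. Suppose that for every k with 1 ≤ k ≤ p-1, (η^{2k} - η^{-2k})(η^{2kq} - η^{-2kq}) = (η^{2kc} - η^{-2kc})(η^{2kcq'} - η^{-2kcq'}). Then either q ≡ q' (mod p) or qq' ≡ 1 (mod p). -/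
open Polynomial

lemma aux_zpow_val (p : ℕ) [NeZero p] (x : ℂ) (hx : x ^ p = 1) (m : ℤ) :
    x ^ m = x ^ ((m : ZMod p)).val := by
  have hx0 : x ≠ 0 := by
    rintro rfl
    rw [zero_pow (NeZero.ne p)] at hx
    exact zero_ne_one hx
  have h1 : (((m : ZMod p).val : ℤ)) = m % p := ZMod.val_intCast m
  have h2 : x ^ m = x ^ (m % p) := by
    conv_lhs => rw [← Int.mul_ediv_add_emod m p]
    rw [zpow_add₀ hx0, zpow_mul, zpow_natCast, hx, one_zpow, one_mul]
  rw [h2, ← h1, zpow_natCast]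

lemma aux_ext (p : ℕ) [NeZero p] (a b c d a' b' c' d' : ℤ)
    (h : (X ^ ((a : ZMod p)).val + X ^ ((b : ZMod p)).val + X ^ ((c : ZMod p)).val
            + X ^ ((d : ZMod p)).val : ℤ[X])
       = X ^ ((a' : ZMod p)).val + X ^ ((b' : ZMod p)).val + X ^ ((c' : ZMod p)).val
            + X ^ ((d' : ZMod p)).val) :
    (a : ZMod p) = a' ∨ (a : ZMod p) = b' ∨ (a : ZMod p) = c' ∨ (a : ZMod p) = d' := by
  have h0 := congrArg (fun P => Polynomial.coeff P ((a : ZMod p)).val) h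
  simp only [coeff_add, coeff_X_pow, eq_self_iff_true, if_true] at h0
  by_contra hcon
  push_neg at hcon
  obtain ⟨n1, n2, n3, n4⟩ := hcon
  have vinj := ZMod.val_injective p
  rw [if_neg (fun hh => n1 (vinj hh)), if_neg (fun hh => n2 (vinj hh)),
    if_neg (fun hh => n3 (vinj hh)), if_neg (fun hh => n4 (vinj hh))] at h0
  split_ifs at h0 <;> omega

theorem lens_space_classification_arith (p : ℕ) (hp : 3 ≤ p) (hodd : Odd p)
    (η : ℂ) (hη : η = Complex.exp (2 * Real.pi * Complex.I / p))
    (q q' c : ℤ) (hq : Int.gcd q p = 1) (hq' : Int.gcd q' p = 1)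
    (hc : Int.gcd c p = 1) (hq0 : 0 < q) (hqp : q < p) (hq'0 : 0 < q') (hq'p : q' < p)
    (h : ∀ k : ℤ, 1 ≤ k → k ≤ p - 1 →
      (η ^ (2 * k) - η ^ (-(2 * k))) * (η ^ (2 * k * q) - η ^ (-(2 * k * q)))
        = (η ^ (2 * k * c) - η ^ (-(2 * k * c))) *
            (η ^ (2 * k * c * q') - η ^ (-(2 * k * c * q')))) :
    q ≡ q' [ZMOD p] ∨ q * q' ≡ 1 [ZMOD p] := by
  haveI : NeZero p := ⟨by omega⟩
  haveI : Fact (1 < p) := ⟨by omega⟩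
  have hη0 : η ≠ 0 := by rw [hη]; exact Complex.exp_ne_zero _
  have hηprim : IsPrimitiveRoot η p := by rw [hη]; exact Complex.isPrimitiveRoot_exp p (by omega)
  have hζ : IsPrimitiveRoot (η ^ 2) p := hηprim.pow_of_coprime 2 hodd.coprime_two_left
  have hζp : (η ^ 2) ^ p = 1 := hζ.pow_eq_one
  -- the integer polynomial
  set PL : ℤ[X] := X ^ (((1 + q : ℤ) : ZMod p)).val + X ^ (((-(1 + q) : ℤ) : ZMod p)).val
      + X ^ (((c * (1 - q') : ℤ) : ZMod p)).val + X ^ (((-(c * (1 - q')) : ℤ) : ZMod p)).val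
    with hPL
  set PR : ℤ[X] := X ^ (((c * (1 + q') : ℤ) : ZMod p)).val + X ^ (((-(c * (1 + q')) : ℤ) : ZMod p)).val
      + X ^ (((1 - q : ℤ) : ZMod p)).val + X ^ (((-(1 - q) : ℤ) : ZMod p)).val
    with hPR
  have heval : ∀ i : Fin p, Polynomial.eval ((η ^ 2) ^ (i : ℕ)) ((PL - PR).map (Int.castRingHom ℂ)) = 0 := by
    intro i
    obtain ⟨k, hk⟩ := i
    have hpow : ∀ m : ℤ, ((η ^ 2) ^ k) ^ (((m : ZMod p)).val) = η ^ (2 * (k : ℤ) * m) := by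
      intro m
      have hxp : ((η ^ 2) ^ k) ^ p = 1 := by
        rw [← pow_mul, mul_comm, pow_mul, hζp, one_pow]
      rw [← aux_zpow_val p _ hxp m, ← zpow_natCast (η ^ 2) k, ← zpow_mul,
        ← zpow_natCast η 2, ← zpow_mul, ← mul_assoc]
      norm_num
    rw [hPL, hPR]
    simp only [Polynomial.map_sub, Polynomial.map_add, Polynomial.map_pow, Polynomial.map_X,
      Polynomial.eval_sub, Polynomial.eval_add, Polynomial.eval_pow, Polynomial.eval_X]
    rw [hpow, hpow, hpow, hpow, hpow, hpow, hpow, hpow]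
    rcases Nat.eq_zero_or_pos k with rfl | hk1
    · norm_num
    · have hk2 : (1 : ℤ) ≤ (k : ℤ) := by exact_mod_cast hk1
      have hk3 : (k : ℤ) ≤ (p : ℤ) - 1 := by
        have : (k : ℤ) < p := by exact_mod_cast hk
        omega
      have hkk := h k hk2 hk3
      have expand : ∀ a b : ℤ, (η ^ a - η ^ (-a)) * (η ^ b - η ^ (-b))
          = η ^ (a + b) + η ^ (-(a + b)) - η ^ (a - b) - η ^ (-(a - b)) := by
        intro a b
        have e : ∀ s t : ℤ, η ^ s * η ^ t = η ^ (s + t) := fun s t => (zpow_add₀ hη0 s t).symm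
        calc (η ^ a - η ^ (-a)) * (η ^ b - η ^ (-b))
            = η ^ a * η ^ b + η ^ (-a) * η ^ (-b) - η ^ a * η ^ (-b) - η ^ (-a) * η ^ b := by
              ring
          _ = η ^ (a + b) + η ^ (-a + -b) - η ^ (a + -b) - η ^ (-a + b) := by rw [e, e, e, e]
          _ = _ := by
              rw [show -a + -b = -(a + b) from by ring, show a + -b = a - b from by ring,
                show -a + b = -(a - b) from by ring]
      rw [expand, expand] at hkk
      rw [show 2 * (k : ℤ) * (1 + q) = 2 * (k : ℤ) + 2 * (k : ℤ) * q from by ring,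
        show 2 * (k : ℤ) * (-(1 + q)) = -(2 * (k : ℤ) + 2 * (k : ℤ) * q) from by ring,
        show 2 * (k : ℤ) * (c * (1 - q')) = 2 * (k : ℤ) * c - 2 * (k : ℤ) * c * q' from by ring,
        show 2 * (k : ℤ) * (-(c * (1 - q'))) = -(2 * (k : ℤ) * c - 2 * (k : ℤ) * c * q') from by ring,
        show 2 * (k : ℤ) * (c * (1 + q')) = 2 * (k : ℤ) * c + 2 * (k : ℤ) * c * q' from by ring,
        show 2 * (k : ℤ) * (-(c * (1 + q'))) = -(2 * (k : ℤ) * c + 2 * (k : ℤ) * c * q') from by ring,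
        show 2 * (k : ℤ) * (1 - q) = 2 * (k : ℤ) - 2 * (k : ℤ) * q from by ring,
        show 2 * (k : ℤ) * (-(1 - q)) = -(2 * (k : ℤ) - 2 * (k : ℤ) * q) from by ring]
      linear_combination hkk
  have hinj : Function.Injective (fun i : Fin p => (η ^ 2) ^ (i : ℕ)) := by
    intro i j hij
    exact Fin.ext (hζ.pow_inj i.isLt j.isLt hij)
  have hXp : ∀ m : ℤ, ((X : ℤ[X]) ^ (((m : ZMod p)).val)).natDegree ≤ p - 1 := fun m => by
    rw [Polynomial.natDegree_X_pow]
    have := ZMod.val_lt ((m : ZMod p))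
    omega
  have h4 : ∀ a b c d : ℤ, ((X ^ (((a : ZMod p)).val) + X ^ (((b : ZMod p)).val)
      + X ^ (((c : ZMod p)).val) + X ^ (((d : ZMod p)).val) : ℤ[X])).natDegree ≤ p - 1 :=
    fun a b c d =>
      le_trans (Polynomial.natDegree_add_le _ _) (max_le (le_trans (Polynomial.natDegree_add_le _ _)
        (max_le (le_trans (Polynomial.natDegree_add_le _ _) (max_le (hXp a) (hXp b))) (hXp c)))
        (hXp d))
  have hcard : ((PL - PR).map (Int.castRingHom ℂ)).natDegree < Fintype.card (Fin p) := by
    rw [Fintype.card_fin]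
    refine lt_of_le_of_lt Polynomial.natDegree_map_le ?_
    have : (PL - PR).natDegree ≤ p - 1 := by
      rw [hPL, hPR]
      exact le_trans (Polynomial.natDegree_sub_le _ _) (max_le (h4 _ _ _ _) (h4 _ _ _ _))
    omega
  have hmap0 : (PL - PR).map (Int.castRingHom ℂ) = 0 :=
    Polynomial.eq_zero_of_natDegree_lt_card_of_eval_eq_zero _ hinj heval hcard
  have hQZ : PL - PR = 0 := by
    apply Polynomial.map_injective (Int.castRingHom ℂ) Int.cast_injective
    rw [hmap0, Polynomial.map_zero]
  have hQeq : PL = PR := sub_eq_zero.mp hQZ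
  rw [hPL, hPR] at hQeq
  -- units
  have hunit : ∀ m : ℤ, Int.gcd m p = 1 → IsUnit ((m : ℤ) : ZMod p) := by
    intro m hm
    have hco : IsCoprime (m : ℤ) ((p : ℕ) : ℤ) := Int.isCoprime_iff_gcd_eq_one.mpr hm
    have hmap := hco.map (Int.castRingHom (ZMod p))
    simp only [Int.coe_castRingHom, Int.cast_natCast, ZMod.natCast_self,
      isCoprime_zero_right] at hmap
    exact hmap
  have hqu := hunit q hq
  have hq'u := hunit q' hq'
  have hcu := hunit c hc
  have h2u : IsUnit (2 : ZMod p) := by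
    have h22 : ((2 : ℕ) : ZMod p) = 2 := by push_cast; ring
    rw [← h22]
    exact (ZMod.isUnit_iff_coprime 2 p).mpr hodd.coprime_two_left
  have h2ne : (2 : ZMod p) ≠ 0 := h2u.ne_zero
  have h2qne : (2 : ZMod p) * (q : ZMod p) ≠ 0 := (h2u.mul hqu).ne_zero
  have hA := aux_ext p (1 + q) (-(1 + q)) (c * (1 - q')) (-(c * (1 - q')))
    (c * (1 + q')) (-(c * (1 + q'))) (1 - q) (-(1 - q)) hQeq
  have hB := aux_ext p (1 - q) (-(1 - q)) (c * (1 + q')) (-(c * (1 + q')))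
    (c * (1 - q')) (-(c * (1 - q'))) (1 + q) (-(1 + q)) (by linear_combination -hQeq)
  rcases hA with hA | hA | hA | hA
  rotate_left 2
  · -- (1+q) = (1-q) : impossible
    push_cast at hA
    exact absurd (by linear_combination hA : (2 : ZMod p) * (q : ZMod p) = 0) h2qne
  · -- (1+q) = -(1-q) : impossible
    push_cast at hA
    exact absurd (by linear_combination hA : (2 : ZMod p) = 0) h2ne
  all_goals rcases hB with hB | hB | hB | hB
  rotate_left 2
  · push_cast at hB
    exact absurd (by linear_combination -hB : (2 : ZMod p) * (q : ZMod p) = 0) h2qne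
  · push_cast at hB
    exact absurd (by linear_combination hB : (2 : ZMod p) = 0) h2ne
  rotate_left 2
  · push_cast at hB
    exact absurd (by linear_combination -hB : (2 : ZMod p) * (q : ZMod p) = 0) h2qne
  · push_cast at hB
    exact absurd (by linear_combination hB : (2 : ZMod p) = 0) h2ne
  -- four main cases
  · -- (+,+)
    push_cast at hA hB
    have e1 : (2 : ZMod p) * 1 = 2 * (c : ZMod p) := by linear_combination hA + hB
    have hc1 : (1 : ZMod p) = (c : ZMod p) := h2u.mul_left_cancel e1
    have e2 : (2 : ZMod p) * (q : ZMod p) = 2 * (q' : ZMod p) := by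
      linear_combination hA - hB - 2 * (q' : ZMod p) * hc1
    exact Or.inl ((ZMod.intCast_eq_intCast_iff q q' p).mp (h2u.mul_left_cancel e2))
  · -- (+,-)
    push_cast at hA hB
    have e1 : (2 : ZMod p) * (q : ZMod p) = 2 * (c : ZMod p) := by linear_combination hA - hB
    have hqc : (q : ZMod p) = (c : ZMod p) := h2u.mul_left_cancel e1
    have e2 : (2 : ZMod p) * ((q : ZMod p) * (q' : ZMod p)) = 2 * 1 := by
      linear_combination -hA - hB + 2 * (q' : ZMod p) * hqc
    refine Or.inr ((ZMod.intCast_eq_intCast_iff (q * q') 1 p).mp ?_)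
    push_cast
    exact h2u.mul_left_cancel e2
  · -- (-,+)
    push_cast at hA hB
    have e1 : (2 : ZMod p) * (q : ZMod p) = 2 * (-(c : ZMod p)) := by linear_combination hA - hB
    have hqc : (q : ZMod p) = -(c : ZMod p) := h2u.mul_left_cancel e1
    have e2 : (2 : ZMod p) * ((q : ZMod p) * (q' : ZMod p)) = 2 * 1 := by
      linear_combination -hA - hB + 2 * (q' : ZMod p) * hqc
    refine Or.inr ((ZMod.intCast_eq_intCast_iff (q * q') 1 p).mp ?_)
    push_cast
    exact h2u.mul_left_cancel e2
  · -- (-,-)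
    push_cast at hA hB
    have e1 : (2 : ZMod p) * (-1) = 2 * (c : ZMod p) := by linear_combination -hA - hB
    have hc1 : (-1 : ZMod p) = (c : ZMod p) := h2u.mul_left_cancel e1
    have e2 : (2 : ZMod p) * (q : ZMod p) = 2 * (q' : ZMod p) := by
      linear_combination hA - hB + 2 * (q' : ZMod p) * hc1
    exact Or.inl ((ZMod.intCast_eq_intCast_iff q q' p).mp (h2u.mul_left_cancel e2))
end
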